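/- arXiv:2312.14438 — 2 statements merged into one kernel-verified Lean document; each statement's English description precedes it below -/
import Mathlib

section
/- Fix K ≥ 1, N ≥ K, and t ∉ {1, 2, ..., K}. The (N+1)×K matrix A with entries A_{n k} = C_n(k, t) (Poisson-Charlier polynomial, n = 0, ..., N, k = 1, ..., K) has linearly independent columns, i.e., A·θ = 0 implies θ = 0. -/
open Matrix Polynomial

/-- The Poisson-Charlier polynomials defined by the three-term recurrence. -/
noncomputable def PC (γ t : ℝ) : ℕ → ℝ
  | 0 => 1
  | 1 => γ - t
  | n + 2 => (γ - ((n : ℝ) + 2) - t + 1) * PC γ t (n + 1) - ((n : ℝ) + 1) * t * PC γ t n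

noncomputable def PCpoly (t : ℝ) : ℕ → Polynomial ℝ
  | 0 => 1
  | 1 => X - C t
  | n + 2 => (X - C (((n : ℝ) + 2) + t - 1)) * PCpoly t (n + 1)
      - C (((n : ℝ) + 1) * t) * PCpoly t n

lemma PCpoly_eval (t γ : ℝ) : ∀ n, (PCpoly t n).eval γ = PC γ t n := by
  intro n
  induction n using Nat.strong_induction_on with
  | _ n ih =>
    match n with
    | 0 => simp [PCpoly, PC]
    | 1 => simp [PCpoly, PC]
    | n + 2 =>
      have h1 := ih (n + 1) (by omega)
      have h0 := ih n (by omega)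
      simp only [PCpoly, PC, eval_sub, eval_mul, eval_X, eval_C, h1, h0]
      ring

lemma PCpoly_deg (t : ℝ) : ∀ n, (PCpoly t n).natDegree ≤ n ∧ (PCpoly t n).coeff n = 1 := by
  intro n
  induction n using Nat.strong_induction_on with
  | _ n ih =>
    match n with
    | 0 => simp [PCpoly]
    | 1 =>
      constructor
      · simpa [PCpoly] using natDegree_X_sub_C_le t
      · simp [PCpoly, coeff_sub]
    | n + 2 =>
      obtain ⟨hd1, hc1⟩ := ih (n + 1) (by omega)
      obtain ⟨hd0, hc0⟩ := ih n (by omega)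
      have hPeq : PCpoly t (n + 2) = (X - C (((n : ℝ) + 2) + t - 1)) * PCpoly t (n + 1)
          - C (((n : ℝ) + 1) * t) * PCpoly t n := rfl
      rw [hPeq]
      constructor
      · apply le_trans (natDegree_sub_le _ _)
        apply max_le
        · apply le_trans (natDegree_mul_le)
          have := natDegree_X_sub_C_le (((n : ℝ) + 2) + t - 1)
          omega
        · apply le_trans (natDegree_mul_le)
          have : (C (((n : ℝ) + 1) * t)).natDegree = 0 := natDegree_C _
          omega
      · have e1 : (PCpoly t (n + 1)).coeff (n + 1 + 1) = 0 :=
          coeff_eq_zero_of_natDegree_lt (by omega)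
        have e0 : (PCpoly t n).coeff (n + 2) = 0 :=
          coeff_eq_zero_of_natDegree_lt (by omega)
        rw [coeff_sub, mul_comm, coeff_mul_X_sub_C, coeff_C_mul, e0, hc1, e1]
        ring

lemma key_sum {K N : ℕ} (t : ℝ) (θ : Fin K → ℝ)
    (H : ∀ n : ℕ, n ≤ N → ∑ k : Fin K, PC ((k : ℕ) + 1 : ℝ) t n * θ k = 0) :
    ∀ d : ℕ, d ≤ N → ∀ p : Polynomial ℝ, p.natDegree ≤ d →
      ∑ k : Fin K, p.eval ((k : ℕ) + 1 : ℝ) * θ k = 0 := by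
  intro d
  induction d using Nat.strong_induction_on with
  | _ d ih =>
    intro hdN p hp
    match d with
    | 0 =>
      have hpc : p = C (p.coeff 0) := eq_C_of_natDegree_le_zero hp
      have := H 0 (by omega)
      calc ∑ k : Fin K, p.eval ((k : ℕ) + 1 : ℝ) * θ k
          = p.coeff 0 * ∑ k : Fin K, PC ((k : ℕ) + 1 : ℝ) t 0 * θ k := by
            rw [Finset.mul_sum]
            refine Finset.sum_congr rfl fun k _ => ?_
            rw [hpc]; simp [PC]
        _ = 0 := by rw [this, mul_zero]
    | d + 1 =>
      set c := p.coeff (d + 1) with hc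
      set q := p - C c * PCpoly t (d + 1) with hq
      have hqd : q.natDegree ≤ d := by
        rw [natDegree_le_iff_coeff_eq_zero]
        intro m hm
        have hPd := (PCpoly_deg t (d + 1)).1
        have hPc := (PCpoly_deg t (d + 1)).2
        rcases eq_or_lt_of_le (Nat.succ_le_of_lt hm) with he | hlt
        · simp [hq, coeff_sub, coeff_C_mul, ← he, hPc, hc]
        · have h1 : p.coeff m = 0 := coeff_eq_zero_of_natDegree_lt (by omega)
          have h2 : (PCpoly t (d + 1)).coeff m = 0 :=
            coeff_eq_zero_of_natDegree_lt (by omega)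
          simp [hq, coeff_sub, coeff_C_mul, h1, h2]
      have hqsum : ∑ k : Fin K, q.eval ((k : ℕ) + 1 : ℝ) * θ k = 0 :=
        ih d (by omega) (by omega) q hqd
      have hPsum : ∑ k : Fin K, (PCpoly t (d + 1)).eval ((k : ℕ) + 1 : ℝ) * θ k = 0 := by
        have := H (d + 1) (by omega)
        simpa [PCpoly_eval] using this
      have hpq : p = q + C c * PCpoly t (d + 1) := by rw [hq]; ring
      calc ∑ k : Fin K, p.eval ((k : ℕ) + 1 : ℝ) * θ k
          = ∑ k : Fin K, (q.eval ((k : ℕ) + 1 : ℝ) * θ k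
              + c * ((PCpoly t (d + 1)).eval ((k : ℕ) + 1 : ℝ) * θ k)) := by
            refine Finset.sum_congr rfl fun k _ => ?_
            rw [hpq]; simp; ring
        _ = 0 := by
            rw [Finset.sum_add_distrib, hqsum, ← Finset.mul_sum, hPsum]; ring

/-- The `(N+1) × K` matrix `A_{n k} = C_n(k,t)` (n = 0,…,N; k = 1,…,K) has linearly
independent columns whenever `K ≥ 1`, `N ≥ K` and `t ∉ {1, …, K}`. -/
theorem PC_matrix_columns_independent {K N : ℕ} (hK : 1 ≤ K) (hN : K ≤ N) (t : ℝ)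
    (ht : ∀ j ∈ Finset.Icc 1 K, t ≠ (j : ℝ)) (θ : Fin K → ℝ)
    (h : (Matrix.of fun (n : Fin (N + 1)) (k : Fin K) =>
        PC ((k : ℕ) + 1 : ℝ) t (n : ℕ)).mulVec θ = 0) :
    θ = 0 := by
  have H : ∀ n : ℕ, n ≤ N → ∑ k : Fin K, PC ((k : ℕ) + 1 : ℝ) t n * θ k = 0 := by
    intro n hn
    have := congrFun h ⟨n, by omega⟩
    simpa [Matrix.mulVec, dotProduct] using this
  funext k0
  -- Lagrange-type polynomial vanishing at all nodes except k0
  set p : Polynomial ℝ :=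
    ∏ j ∈ Finset.univ.erase k0, (X - C (((j : ℕ) : ℝ) + 1)) with hp
  have hdeg : p.natDegree ≤ N := by
    have : p.natDegree ≤ (Finset.univ.erase k0).card := by
      apply le_trans (natDegree_prod_le _ _)
      apply le_trans (Finset.sum_le_card_nsmul _ _ 1 ?_)
      · simp
      · intro j _
        simpa using natDegree_X_sub_C_le (((j : ℕ) : ℝ) + 1)
    have hcard : (Finset.univ.erase k0).card = K - 1 := by
      simp [Finset.card_erase_of_mem]
    omega
  have hsum := key_sum t θ H N le_rfl p hdeg
  have heval : ∀ k : Fin K, k ≠ k0 → p.eval ((k : ℕ) + 1 : ℝ) = 0 := by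
    intro k hk
    rw [hp, eval_prod]
    apply Finset.prod_eq_zero (Finset.mem_erase.2 ⟨hk, Finset.mem_univ k⟩)
    simp
  have hne : p.eval ((k0 : ℕ) + 1 : ℝ) ≠ 0 := by
    rw [hp, eval_prod]
    apply Finset.prod_ne_zero_iff.2
    intro j hj
    simp only [eval_sub, eval_X, eval_C]
    have : (j : ℕ) ≠ (k0 : ℕ) := by
      intro he
      exact (Finset.mem_erase.1 hj).1 (Fin.ext he)
    intro he
    apply this
    have : ((k0 : ℕ) : ℝ) = ((j : ℕ) : ℝ) := by linarith
    exact_mod_cast this.symm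
  have : p.eval ((k0 : ℕ) + 1 : ℝ) * θ k0 = 0 := by
    rw [← hsum]
    symm
    apply Finset.sum_eq_single
    · intro k _ hk
      rw [heval k hk, zero_mul]
    · intro hk
      exact absurd (Finset.mem_univ k0) hk
  simpa using (mul_eq_zero.1 this).resolve_left hne
end

section
/- Let G: ℝ → ℝ be N-times continuously differentiable at 0, K ≥ 1, N ≥ K. If t ∉ {1, ..., K}, then there exist θ_0, θ_1, ..., θ_K ∈ ℝ such that the polynomial g(λ) = θ_0 + Σ_{k=1}^{K} θ_k · Σ_{n=0}^{K} C_n(k,t)·(−λ)^n/n! agrees with the Taylor polynomial of G of degree K−1 at 0 in its coefficients of λ^0, ..., λ^{K−1}. -/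
open Polynomial

/-- Polynomial version of the Poisson-Charlier recurrence. -/
noncomputable def PCP (t : ℝ) : ℕ → Polynomial ℝ
  | 0 => 1
  | 1 => X - C t
  | n + 2 => (X + C (-((n : ℝ) + 2) - t + 1)) * PCP t (n + 1) - C (((n : ℝ) + 1) * t) * PCP t n

lemma PCP_eval (t γ : ℝ) : ∀ n, (PCP t n).eval γ = PC γ t n
  | 0 => by simp [PCP, PC]
  | 1 => by simp [PCP, PC]
  | n + 2 => by
      simp only [PCP, PC, eval_sub, eval_mul, eval_add, eval_X, eval_C,
        PCP_eval t γ (n + 1), PCP_eval t γ n]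
      ring

lemma PCP_monic_deg (t : ℝ) : ∀ n, (PCP t n).Monic ∧ (PCP t n).natDegree = n
  | 0 => ⟨monic_one, natDegree_one⟩
  | 1 => ⟨monic_X_sub_C t, by simp [PCP]⟩
  | n + 2 => by
      obtain ⟨h1m, h1d⟩ := PCP_monic_deg t (n + 1)
      obtain ⟨h0m, h0d⟩ := PCP_monic_deg t n
      have hLm : ((X + C (-((n : ℝ) + 2) - t + 1)) * PCP t (n + 1)).Monic :=
        (monic_X_add_C _).mul h1m
      have hLd : ((X + C (-((n : ℝ) + 2) - t + 1)) * PCP t (n + 1)).natDegree = n + 2 := by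
        rw [(monic_X_add_C _).natDegree_mul h1m, natDegree_X_add_C, h1d]; omega
      have hq : (C (((n : ℝ) + 1) * t) * PCP t n).natDegree <
          ((X + C (-((n : ℝ) + 2) - t + 1)) * PCP t (n + 1)).natDegree := by
        rw [hLd]
        exact lt_of_le_of_lt ((natDegree_C_mul_le _ _).trans h0d.le) (by omega)
      have hqd : (C (((n : ℝ) + 1) * t) * PCP t n).degree <
          ((X + C (-((n : ℝ) + 2) - t + 1)) * PCP t (n + 1)).degree :=
        degree_lt_degree hq
      constructor
      · exact hLm.sub_of_left hqd
      · rw [PCP]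
        rw [natDegree_sub_eq_left_of_natDegree_lt hq, hLd]

/-- PC-Conv can match the first `K` Taylor coefficients of any sufficiently smooth filter:
there exist `θ₀, θ₁, …, θ_K` such that the polynomial
`g(λ) = θ₀ + Σ_{k=1}^{K} θ_k Σ_{n=0}^{K} C_n(k,t) (−λ)^n/n!` agrees with the Taylor
polynomial of `G` at `0` in the coefficients of `λ^0, …, λ^{K−1}`. -/
theorem pc_conv_matches_taylor_coefficients (G : ℝ → ℝ) (N K : ℕ)
    (hG : ContDiffAt ℝ (N : ℕ∞) G 0) (hK : 1 ≤ K) (hN : K ≤ N) (t : ℝ)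
    (ht : ∀ j ∈ Finset.Icc 1 K, t ≠ (j : ℝ)) :
    ∃ (θ₀ : ℝ) (θ : Fin K → ℝ),
      (θ₀ + ∑ k : Fin K, θ k * PC ((k : ℕ) + 1 : ℝ) t 0 = G 0) ∧
      ∀ n : ℕ, 1 ≤ n → n ≤ K - 1 →
        ∑ k : Fin K, θ k * PC ((k : ℕ) + 1 : ℝ) t n * (-1) ^ n / (n.factorial : ℝ) =
          iteratedDeriv n G 0 / (n.factorial : ℝ) := by
  classical
  -- the evaluation matrix: columns indexed by polynomials, rows by nodes
  set v : Fin K → ℝ := fun k => (k : ℕ) + 1 with hv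
  set A : Matrix (Fin K) (Fin K) ℝ :=
    Matrix.of (fun i j : Fin K => (PCP t (j : ℕ)).eval (v i)) with hA
  have hdet : A.det ≠ 0 := by
    rw [hA, ← Matrix.det_eval_matrixOfPolynomials_eq_det_vandermonde v (fun j => PCP t (j : ℕ))
      (fun j => (PCP_monic_deg t (j : ℕ)).2) (fun j => (PCP_monic_deg t (j : ℕ)).1)]
    rw [Matrix.det_vandermonde_ne_zero_iff]
    intro a b hab
    have : (a : ℕ) = (b : ℕ) := by
      have := hab
      simp only [hv] at this
      exact_mod_cast (by linarith [this] : ((a : ℕ) : ℝ) = ((b : ℕ) : ℝ))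
    exact Fin.ext this
  -- the transpose M has rows indexed by polynomial degree
  set M : Matrix (Fin K) (Fin K) ℝ := A.transpose with hM
  have hdetM : IsUnit M.det := by
    rw [hM, Matrix.det_transpose]
    exact isUnit_iff_ne_zero.mpr hdet
  set c : Fin K → ℝ := fun n => (-1 : ℝ) ^ (n : ℕ) * iteratedDeriv (n : ℕ) G 0 with hc
  set θ : Fin K → ℝ := M⁻¹.mulVec c with hθ
  have hsol : M.mulVec θ = c := by
    rw [hθ, Matrix.mulVec_mulVec, Matrix.mul_nonsing_inv M hdetM, Matrix.one_mulVec]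
  have key : ∀ n : Fin K, ∑ k : Fin K, θ k * PC ((k : ℕ) + 1 : ℝ) t (n : ℕ)
      = (-1 : ℝ) ^ (n : ℕ) * iteratedDeriv (n : ℕ) G 0 := by
    intro n
    have := congrFun hsol n
    simp only [Matrix.mulVec, dotProduct, hM, Matrix.transpose_apply, hA,
      Matrix.of_apply, hc] at this
    rw [← this]
    congr 1
    ext k
    rw [PCP_eval, mul_comm]
  refine ⟨G 0 - ∑ k : Fin K, θ k * PC ((k : ℕ) + 1 : ℝ) t 0, θ, by ring, ?_⟩
  intro n hn1 hnK
  have hnK' : n < K := by omega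
  have hfac : (n.factorial : ℝ) ≠ 0 := Nat.cast_ne_zero.mpr n.factorial_ne_zero
  have hkey := key ⟨n, hnK'⟩
  simp only [Fin.val_mk] at hkey
  have : (∑ k : Fin K, θ k * PC ((k : ℕ) + 1 : ℝ) t n * (-1) ^ n / (n.factorial : ℝ))
      = (∑ k : Fin K, θ k * PC ((k : ℕ) + 1 : ℝ) t n) * (-1) ^ n / (n.factorial : ℝ) := by
    rw [eq_comm, Finset.sum_mul, Finset.sum_div]
  rw [this, hkey]
  have hsq : ((-1 : ℝ)) ^ n * (-1) ^ n = 1 := by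
    rw [← pow_add, ← two_mul, pow_mul]; norm_num
  rw [div_eq_div_iff hfac hfac]
  linear_combination (iteratedDeriv n G 0 * (n.factorial : ℝ)) * hsq
end
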